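/- arXiv:2112.07552 — 3 statements merged into one kernel-verified Lean document; each statement's English description precedes it below -/
import Mathlib

section
/- Let V and U be finite types with decidable equality, let a : Fin n → V and c : Fin m → U be the join attributes of the outer tables A and C, and let B : V → U → Prop be a decidable relation (the middle table, whose value attributes are projected out entirely). Let adj(B) : Matrix V U ℕ be the adjacency matrix of B. Then for all i : Fin n and j : Fin m, (mat(a) * adj(B) * (mat(c))ᵀ) i j > 0 if and only if B (a i) (c j) holds, i.e., if and only if the pair of rows (i, j) appears in the three-way natural join A ⋈ B ⋈ C on A.ID₁ = B.ID₁ and B.ID₂ = C.ID₂. -/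
open Matrix

/-- One-hot matrix of a function `f : Fin n → V`: entry `(i, v)` is `1` if `f i = v`, else `0`. -/
def oneHot {n : ℕ} {V : Type*} [DecidableEq V] (f : Fin n → V) : Matrix (Fin n) V ℕ :=
  fun i v => if f i = v then 1 else 0

/-- Adjacency matrix of a decidable relation `R : X → Y → Prop`. -/
def adj {X Y : Type*} (R : X → Y → Prop) [∀ x y, Decidable (R x y)] : Matrix X Y ℕ :=
  fun x y => if R x y then 1 else 0

/-- Three-way natural join `A ⋈ B ⋈ C` (with the middle table `B` projected out)
as a triple matrix product: `(mat(a) * adj(B) * mat(c)ᵀ) i j > 0` iff `B (a i) (c j)`. -/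
theorem threeWayJoin_iff_pos {V U : Type*} [Fintype V] [DecidableEq V]
    [Fintype U] [DecidableEq U] {n m : ℕ}
    (a : Fin n → V) (c : Fin m → U) (B : V → U → Prop) [∀ v u, Decidable (B v u)] :
    ∀ (i : Fin n) (j : Fin m),
      (oneHot a * adj B * (oneHot c)ᵀ) i j > 0 ↔ B (a i) (c j) := by
  intro i j
  have h : (oneHot a * adj B * (oneHot c)ᵀ) i j = adj B (a i) (c j) := by
    have key : ∀ x : V, (if B x (c j) then if x = a i then (1:ℕ) else 0 else 0)
        = if x = a i then (if B x (c j) then 1 else 0) else 0 := by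
      intro x; split_ifs <;> simp_all
    simp [Matrix.mul_apply, oneHot, adj, transpose_apply, ite_and, @eq_comm V (a _), @eq_comm U (c _),
      key, Finset.sum_ite_eq, Finset.sum_ite_eq']
  rw [h, adj]
  split <;> simp_all
end

section
/- Let V and U be finite types with decidable equality; let a₁ : Fin n → V be the ID₁ attribute of table A, let b₁ : Fin m → V and b₂ : Fin m → U be the ID₁ and ID₂ attributes of table B, and let c₂ : Fin p → U be the ID₂ attribute of table C. Let P = mat(a₁) * (mat(b₁))ᵀ and let NZ be the subtype {(i, j) : Fin n × Fin m // P i j > 0} of nonzero positions of P. Define mat(AB) : Matrix NZ U ℕ by mat(AB) ⟨(i, j)⟩ u = 1 if b₂ j = u and 0 otherwise. Then for every ⟨(i, j)⟩ : NZ and l : Fin p, (mat(AB) * (mat(c₂))ᵀ) ⟨(i, j)⟩ l > 0 if and only if a₁ i = b₁ j and b₂ j = c₂ l; i.e., the two-step matrix method with intermediate nonzero extraction computes exactly the three-way natural join A ⋈ B ⋈ C. -/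
open Matrix

/-- The intermediate join-result matrix `P = mat(a₁) * mat(b₁)ᵀ`. -/
def joinP {V : Type*} [Fintype V] [DecidableEq V] {n m : ℕ}
    (a₁ : Fin n → V) (b₁ : Fin m → V) : Matrix (Fin n) (Fin m) ℕ :=
  oneHot a₁ * (oneHot b₁)ᵀ

/-- The nonzero positions of the intermediate join-result matrix `P`. -/
def NZ {V : Type*} [Fintype V] [DecidableEq V] {n m : ℕ}
    (a₁ : Fin n → V) (b₁ : Fin m → V) : Type :=
  {q : Fin n × Fin m // joinP a₁ b₁ q.1 q.2 > 0}

/-- The matrix `mat(AB)` built from the nonzero positions of `P`, one-hot encoding the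
`ID₂` attribute `b₂` of the `B`-row of each surviving pair. -/
def matAB {V U : Type*} [Fintype V] [DecidableEq V] [DecidableEq U] {n m : ℕ}
    (a₁ : Fin n → V) (b₁ : Fin m → V) (b₂ : Fin m → U) :
    Matrix (NZ a₁ b₁) U ℕ :=
  fun z u => if b₂ z.1.2 = u then 1 else 0

/-- The two-step matrix method with intermediate nonzero extraction computes exactly the
three-way natural join `A ⋈ B ⋈ C`: for a nonzero position `z = (i, j)` of `P` and `l : Fin p`,
`(mat(AB) * mat(c₂)ᵀ) z l > 0` iff `a₁ i = b₁ j ∧ b₂ j = c₂ l`. -/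
theorem twoStep_threeWayJoin {V U : Type*} [Fintype V] [DecidableEq V]
    [Fintype U] [DecidableEq U] {n m p : ℕ}
    (a₁ : Fin n → V) (b₁ : Fin m → V) (b₂ : Fin m → U) (c₂ : Fin p → U) :
    ∀ (z : NZ a₁ b₁) (l : Fin p),
      (matAB a₁ b₁ b₂ * (oneHot c₂)ᵀ) z l > 0 ↔
        a₁ z.1.1 = b₁ z.1.2 ∧ b₂ z.1.2 = c₂ l := by
  intro z l
  have ha : a₁ z.1.1 = b₁ z.1.2 := by
    have h := z.2
    simp only [joinP, Matrix.mul_apply, oneHot, Matrix.transpose_apply] at h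
    obtain ⟨v, -, hv⟩ := Finset.exists_ne_zero_of_sum_ne_zero h.ne'
    by_cases h1 : a₁ z.1.1 = v <;> by_cases h2 : b₁ z.1.2 = v <;>
      first | (simp [h1, h2] at hv ⊢) | exact h1.trans h2.symm
  simp only [Matrix.mul_apply, matAB, oneHot, Matrix.transpose_apply]
  rw [Finset.sum_eq_single (b₂ z.1.2)]
  · by_cases h : c₂ l = b₂ z.1.2
    · simp [h, ha]
    · simp only [if_neg h]
      simp [ha]
      exact fun e => h e.symm
  · intro u _ hu; simp [Ne.symm hu]
  · simp
end

section
/- (Lemma Q3) Let V and W be finite types with decidable equality; let a : Fin n → V and val : Fin n → ℝ be the ID and Val attributes of table A, and let B : W → V → Prop be a decidable relation whose pairs are the (Val, ID) pairs of table B, with W enumerating the distinct values of B.Val. Define mat(A) : Matrix (Fin n) V ℝ by mat(A) i v = val i if a i = v and 0 otherwise, and let adj(B) : Matrix W V ℝ be the real adjacency matrix of B. Then for every u : W, the u-th entry of the row vector 𝟙 * mat(A) * (adj(B))ᵀ, where 𝟙 is the all-ones row vector of length n, equals the sum of val i over all i : Fin n with B u (a i); that is, it equals SUM(A.Val) grouped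 by B.Val = u over the natural join A ⋈ B on A.ID = B.ID. -/
open Matrix

/-- Value-filled matrix of table `A`: entry `(i, v)` is `val i` if `a i = v`, else `0`. -/
def valMat {n : ℕ} {V : Type*} [DecidableEq V] (a : Fin n → V) (val : Fin n → ℝ) :
    Matrix (Fin n) V ℝ :=
  fun i v => if a i = v then val i else 0

/-- Real adjacency matrix of a decidable relation. -/
def adjR {W V : Type*} (R : W → V → Prop) [∀ w v, Decidable (R w v)] : Matrix W V ℝ :=
  fun w v => if R w v then 1 else 0

/-- The all-ones row vector of length `n`. -/
def onesRow (n : ℕ) : Matrix (Fin 1) (Fin n) ℝ := fun _ _ => 1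

/-- (Lemma Q3) `SUM(A.Val) GROUP BY B.Val` over the join `A ⋈ B` via matrix products:
the `u`-th entry of `𝟙 * mat(A) * adj(B)ᵀ` is the sum of `val i` over rows `i` of `A`
joining with a `B`-row whose value attribute is `u`. -/
theorem groupBy_sum_eq {V W : Type*} [Fintype V] [DecidableEq V]
    [Fintype W] [DecidableEq W] {n : ℕ}
    (a : Fin n → V) (val : Fin n → ℝ) (B : W → V → Prop) [∀ w v, Decidable (B w v)] :
    ∀ u : W,
      (onesRow n * valMat a val * (adjR B)ᵀ) 0 u =
        ∑ i ∈ Finset.univ.filter (fun i : Fin n => B u (a i)), val i := by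
  intro u
  simp only [Matrix.mul_apply, onesRow, valMat, adjR, transpose_apply, one_mul]
  simp only [Finset.sum_mul]
  rw [Finset.sum_comm]
  rw [Finset.sum_filter]
  refine Finset.sum_congr rfl fun i _ => ?_
  rw [Finset.sum_eq_single (a i)]
  · by_cases h : B u (a i) <;> simp [h]
  · intro v _ hv; simp [Ne.symm hv]
  · simp
end
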